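/- arXiv:1411.3829 — 2 statements merged into one kernel-verified Lean document; each statement's English description precedes it below -/
import Mathlib

section
/- Let G be a nontrivial finite abelian group. The following are equivalent: (1) G is not cyclic; (2) G contains a subgroup isomorphic to C_m × C_m for some integer m ≥ 2 (the square of a nontrivial cyclic group); (3) the Radon transform is injective on G. -/
/-- The Radon transform of `f` at `(x, γ)`: the sum of `f` over the geodesic
determined by the homomorphism `γ : C_n → G`, translated by `x`. -/
noncomputable def radonSum {G : Type*} [Group G] {n : ℕ} [NeZero n]
    (f : G → ℂ) (γ : Multiplicative (ZMod n) →* G) (x : G) : ℂ :=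
  ∑ t : ZMod n, f (x * γ (Multiplicative.ofAdd t))

/-- All Radon transforms of `f` (over geodesics of all lengths `n ≥ 2`) vanish. -/
def RadonNull (G : Type*) [Group G] (f : G → ℂ) : Prop :=
  ∀ (n : ℕ) (hn : 2 ≤ n) (γ : Multiplicative (ZMod n) →* G), γ ≠ 1 → ∀ x : G,
    haveI : NeZero n := ⟨by omega⟩
    radonSum f γ x = 0

/-- The Radon transform is injective on `G`. -/
def RadonInjective (G : Type*) [Group G] : Prop :=
  ∀ f : G → ℂ, RadonNull G f → f = 0

/-!
A finite group is cyclic as soon as `a ^ n = 1` has at most `n` solutions for every `n > 0`. In a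
commutative group this count is submultiplicative in `n` (the map `a ↦ a ^ m` sends the
`k * m`-torsion into the `k`-torsion, with fibres cosets of the `m`-torsion), so a non-cyclic `G`
has more than `p` solutions of `a ^ p = 1` for some prime `p`, hence two independent elements of
order `p`, i.e. a copy of `C_p × C_p`.

If all Radon transforms of `f` vanish, restrict `f` to a translate of that copy, seen as the affine
plane over `𝔽_p`. The non-vertical lines through the origin cover the origin `p` times and every
point off the vertical axis once; those points fill vertical lines, whose sums vanish too. Hence
`p • f 0 = 0`. On a cyclic group, an injective character `G →* ℂ` sums to zero along every
nontrivial geodesic, so it is a nonzero function with vanishing Radon transform.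
-/

open Finset Subgroup Function

section PowEqOne

variable {G : Type*} [CommGroup G] [Fintype G] [DecidableEq G]

lemma card_pow_eq_le_card_pow_eq_one (m : ℕ) (b : G) :
    #{a : G | a ^ m = b} ≤ #{a : G | a ^ m = 1} := by
  rcases eq_empty_or_nonempty {a : G | a ^ m = b} with h | ⟨a₀, ha₀⟩
  · simp [h]
  refine card_le_card_of_injOn (· * a₀⁻¹) (fun a ha ↦ ?_) (mul_left_injective a₀⁻¹).injOn
  simp only [coe_filter, mem_filter, mem_univ, true_and, Set.mem_ofPred_eq] at ha ha₀ ⊢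
  rw [mul_pow, ha, inv_pow, ha₀, mul_inv_cancel]

lemma card_pow_mul_eq_one_le (k m : ℕ) :
    #{a : G | a ^ (k * m) = 1} ≤ #{a : G | a ^ m = 1} * #{a : G | a ^ k = 1} := by
  refine card_le_mul_card_image_of_maps_to (f := (· ^ m)) (fun a ha ↦ ?_) _ fun b _ ↦ ?_
  · simp only [mem_filter, mem_univ, true_and] at ha ⊢
    rwa [← pow_mul, mul_comm]
  · exact (card_le_card (filter_subset_filter _ (subset_univ _))).trans
      (card_pow_eq_le_card_pow_eq_one m b)

lemma card_pow_eq_one_le_of_forall_prime (h : ∀ p, p.Prime → #{a : G | a ^ p = 1} ≤ p) :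
    ∀ n, 0 < n → #{a : G | a ^ n = 1} ≤ n := by
  intro n
  induction n using Nat.recOnMul with
  | zero => simp
  | one => simp [filter_eq']
  | prime p hp => exact fun _ ↦ h p hp
  | mul k m hk hm =>
    intro hkm
    calc #{a : G | a ^ (k * m) = 1}
        ≤ #{a : G | a ^ m = 1} * #{a : G | a ^ k = 1} := card_pow_mul_eq_one_le k m
      _ ≤ m * k :=
        Nat.mul_le_mul (hm (Nat.pos_of_mul_pos_left hkm)) (hk (Nat.pos_of_mul_pos_right hkm))
      _ = k * m := mul_comm m k

lemma exists_prime_lt_card_pow_eq_one (h : ¬IsCyclic G) :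
    ∃ p, p.Prime ∧ p < #{a : G | a ^ p = 1} := by
  by_contra! hp
  exact h (isCyclic_of_card_pow_eq_one_le (card_pow_eq_one_le_of_forall_prime hp))

end PowEqOne

lemma disjoint_zpowers_of_notMem {G : Type*} [Group G] {H : Subgroup G} {b : G}
    (hb : (orderOf b).Prime) (hbH : b ∉ H) : Disjoint H (zpowers b) := by
  have : Fact (Nat.card (zpowers b)).Prime := ⟨by rwa [Nat.card_zpowers]⟩
  rcases (H.subgroupOf (zpowers b)).eq_bot_or_eq_top_of_prime_card with h | h
  · exact subgroupOf_eq_bot.mp h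
  · exact absurd (subgroupOf_eq_top.mp h (mem_zpowers b)) hbH

lemma exists_injective_zmod_range_le_zpowers {G : Type*} [Group G] {p : ℕ} [Fact p.Prime]
    {a : G} (ha : orderOf a = p) :
    ∃ f : Multiplicative (ZMod p) →* G, Injective f ∧ f.range ≤ zpowers a :=
  ⟨(zpowers a).subtype.comp
      (mulEquivOfPrimeCardEq (p := p) (by simp) (by rw [Nat.card_zpowers, ha])).toMonoidHom,
    Subtype.val_injective.comp (MulEquiv.injective _),
    by rintro _ ⟨x, rfl⟩; exact SetLike.coe_mem _⟩

lemma exists_injective_zmod_prod_of_notMem_zpowers {G : Type*} [CommGroup G] {p : ℕ}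
    [Fact p.Prime] {a b : G} (ha : orderOf a = p) (hb : orderOf b = p) (hab : b ∉ zpowers a) :
    ∃ ψ : Multiplicative (ZMod p × ZMod p) →* G, Injective ψ := by
  obtain ⟨f, hf, hfa⟩ := exists_injective_zmod_range_le_zpowers ha
  obtain ⟨g, hg, hgb⟩ := exists_injective_zmod_range_le_zpowers hb
  have hdisj : Disjoint f.range g.range :=
    (disjoint_zpowers_of_notMem (hb ▸ Fact.out) hab).mono hfa hgb
  have hψ := (MonoidHom.noncommCoprod_injective f g fun _ _ ↦ Commute.all _ _).mpr ⟨hf, hg, hdisj⟩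
  let e := MulEquiv.prodMultiplicative (ZMod p) (ZMod p)
  exact ⟨(f.noncommCoprod g fun _ _ ↦ Commute.all _ _).comp e.toMonoidHom, hψ.comp e.injective⟩

lemma exists_injective_zmod_prod_of_not_isCyclic {G : Type*} [CommGroup G] [Fintype G]
    (h : ¬IsCyclic G) :
    ∃ p, p.Prime ∧ ∃ ψ : Multiplicative (ZMod p × ZMod p) →* G, Injective ψ := by
  classical
  obtain ⟨p, hp, hcard⟩ := exists_prime_lt_card_pow_eq_one h
  have : Fact p.Prime := ⟨hp⟩
  obtain ⟨a, ha, ha1⟩ := exists_mem_ne (hp.one_lt.trans hcard) 1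
  have hap : orderOf a = p := orderOf_eq_prime (by simpa using ha) ha1
  obtain ⟨b, hb, hba⟩ := exists_mem_notMem_of_card_lt_card
    (s := (zpowers a : Set G).toFinset) (t := {a : G | a ^ p = 1})
    (by rwa [← Nat.card_eq_card_toFinset, SetLike.coe_sort_coe, Nat.card_zpowers, hap])
  have hb1 : b ≠ 1 := by rintro rfl; exact hba (by simp)
  exact ⟨p, hp, exists_injective_zmod_prod_of_notMem_zpowers hap
    (orderOf_eq_prime (by simpa using hb) hb1) (by simpa using hba)⟩

lemma not_isAddCyclic_zmod_prod_self {m : ℕ} (hm : m ≠ 1) : ¬IsAddCyclic (ZMod m × ZMod m) := by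
  intro h
  rcases m.eq_zero_or_pos with rfl | hm0
  · exact not_isAddCyclic_prod_of_infinite_nontrivial ℤ ℤ h
  · have : NeZero m := ⟨hm0.ne'⟩
    exact hm (by simpa using coprime_card_of_isAddCyclic_prod (ZMod m) (ZMod m))

lemma apply_zero_eq_zero_of_line_sums_eq_zero {K R : Type*} [Field K] [Fintype K] [Field R]
    [CharZero R] (F : K × K → R) (hvert : ∀ u, ∑ v, F (u, v) = 0)
    (hslope : ∀ a, ∑ t, F (t, t * a) = 0) : F 0 = 0 := by
  have hpencil : ∑ t, ∑ a, F (t, t * a) = Fintype.card K * F 0 := by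
    rw [Fintype.sum_eq_single 0 fun t ht ↦ ?_]
    · simp [nsmul_eq_mul, Prod.mk_zero_zero]
    · rw [← hvert t]
      exact Fintype.sum_equiv (Equiv.mulLeft₀ t ht) _ _ fun _ ↦ rfl
  have : (Fintype.card K : R) * F 0 = 0 := by
    rw [← hpencil, sum_comm]
    exact sum_eq_zero fun a _ ↦ hslope a
  exact (mul_eq_zero.mp this).resolve_left (Nat.cast_ne_zero.mpr Fintype.card_ne_zero)

section Radon

variable {G H : Type*} [Group G] [Group H]

lemma radonSum_comp {n : ℕ} [NeZero n] (f : G → ℂ) (ψ : H →* G) (x : G)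
    (γ : Multiplicative (ZMod n) →* H) (y : H) :
    radonSum (fun h ↦ f (x * ψ h)) γ y = radonSum f (ψ.comp γ) (x * ψ y) := by
  simp [radonSum, mul_assoc]

lemma RadonNull.comp_injective {f : G → ℂ} (hf : RadonNull G f) {ψ : H →* G}
    (hψ : Injective ψ) (x : G) :
    RadonNull H (fun h ↦ f (x * ψ h)) := by
  intro n hn γ hγ y
  have : NeZero n := ⟨by omega⟩
  rw [radonSum_comp]
  exact hf n hn _ (fun h ↦ hγ ((MonoidHom.cancel_left hψ).mp (h.trans ψ.comp_one.symm))) _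

lemma RadonNull.apply_one_eq_zero_of_zmod_prod {p : ℕ} [Fact p.Prime]
    {f : Multiplicative (ZMod p × ZMod p) → ℂ} (hf : RadonNull _ f) : f 1 = 0 := by
  have hline : ∀ d ≠ 0, ∀ x, ∑ t : ZMod p, f (.ofAdd (x + t • d)) = 0 := by
    intro d hd x
    let γ := (LinearMap.toSpanSingleton (ZMod p) _ d).toAddMonoidHom.toMultiplicative
    have hγ : γ ≠ 1 := fun h ↦ hd (by simpa [γ] using DFunLike.congr_fun h (.ofAdd 1))
    simpa [radonSum, γ] using hf p (Fact.out : p.Prime).two_le γ hγ (.ofAdd x)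
  refine apply_zero_eq_zero_of_line_sums_eq_zero (fun v ↦ f (.ofAdd v)) (fun u ↦ ?_) fun a ↦ ?_
  · simpa using hline (0, 1) (by simp) (u, 0)
  · simpa using hline (1, a) (by simp) 0

lemma radonInjective_of_injective {p : ℕ} [Fact p.Prime]
    {ψ : Multiplicative (ZMod p × ZMod p) →* G} (hψ : Injective ψ) : RadonInjective G := by
  intro f hf
  funext x
  simpa using (hf.comp_injective hψ x).apply_one_eq_zero_of_zmod_prod

lemma radonNull_of_injective {χ : G →* ℂ} (hχ : Injective χ) : RadonNull G χ := by
  intro n hn γ hγ x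
  have : NeZero n := ⟨by omega⟩
  have hχγ : χ.comp γ ≠ 1 := fun h ↦
    hγ ((MonoidHom.cancel_left hχ).mp (h.trans χ.comp_one.symm))
  simp only [radonSum, map_mul, ← mul_sum]
  rw [Fintype.sum_equiv Multiplicative.ofAdd (fun t ↦ χ (γ (.ofAdd t))) (χ.comp γ) fun _ ↦ rfl,
    sum_hom_units_eq_zero _ hχγ, mul_zero]

lemma IsCyclic.exists_injective_monoidHom_complex [Finite G] (h : IsCyclic G) :
    ∃ χ : G →* ℂ, Injective χ := by
  have : NeZero (Nat.card G) := ⟨Nat.card_pos.ne'⟩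
  let χ : Multiplicative (ZMod (Nat.card G)) →* ℂ := ZMod.stdAddChar.toMonoidHom
  exact ⟨χ.comp (zmodCyclicMulEquiv h).symm.toMonoidHom,
    ZMod.injective_stdAddChar.comp (zmodCyclicMulEquiv h).symm.injective⟩

lemma IsCyclic.not_radonInjective [Finite G] (h : IsCyclic G) : ¬RadonInjective G := by
  obtain ⟨χ, hχ⟩ := h.exists_injective_monoidHom_complex
  intro hG
  simpa using congr_fun (hG χ (radonNull_of_injective hχ)) 1

end Radon

theorem radon_abelian_tfae_general (G : Type*) [CommGroup G] [Fintype G] :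
    List.TFAE
      [¬ IsCyclic G,
       ∃ m : ℕ, 2 ≤ m ∧ ∃ H : Subgroup G, Nonempty (H ≃* Multiplicative (ZMod m × ZMod m)),
       RadonInjective G] := by
  tfae_have 1 → 2 := fun h ↦ by
    obtain ⟨p, hp, ψ, hψ⟩ := exists_injective_zmod_prod_of_not_isCyclic h
    exact ⟨p, hp.two_le, ψ.range, ⟨(MonoidHom.ofInjective hψ).symm⟩⟩
  tfae_have 2 → 1 := by
    rintro ⟨m, hm, H, ⟨e⟩⟩ _
    exact not_isAddCyclic_zmod_prod_self (by omega)
      (isCyclic_multiplicative_iff.mp (isCyclic_of_surjective e.toMonoidHom e.surjective))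
  tfae_have 1 → 3 := fun h ↦ by
    obtain ⟨p, hp, ψ, hψ⟩ := exists_injective_zmod_prod_of_not_isCyclic h
    have : Fact p.Prime := ⟨hp⟩
    exact radonInjective_of_injective hψ
  tfae_have 3 → 1 := fun h hG ↦ hG.not_radonInjective h
  tfae_finish

theorem radon_abelian_tfae (G : Type*) [CommGroup G] [Fintype G] [Nontrivial G] :
    List.TFAE
      [¬ IsCyclic G,
       ∃ m : ℕ, 2 ≤ m ∧ ∃ H : Subgroup G, Nonempty (H ≃* Multiplicative (ZMod m × ZMod m)),
       RadonInjective G] :=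
  radon_abelian_tfae_general G
end

section
/- Let G be a finite group and f : G → ℂ. Then the Radon transform of f vanishes identically (∑_{t ∈ ZMod n} f(x * γ(t)) = 0 for every n ≥ 2, every nontrivial homomorphism γ : ZMod n → G, and every x ∈ G) if and only if for every irreducible finite-dimensional complex representation ρ of G that has a nonzero fixed point (i.e. there exist x ∈ G with x ≠ 1 and v ≠ 0 with ρ(x) v = v), the Fourier coefficient ∑_{y ∈ G} f(y) • ρ(y) is the zero endomorphism. -/
/-!
Put `e_γ = ∑_c δ_{γ(c)⁻¹}` in the group algebra `ℂ[G]`. The Radon transform of `f` along `γ` is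
the convolution `f * e_γ`, so `f` is Radon-null iff `f * e_γ = 0` for every nontrivial `γ`.

In a representation `ρ`, the image of `ρ(e_γ)` is fixed by every `γ(c)`, so `ρ(e_γ) = 0` as soon as
no element `≠ 1` fixes a nonzero vector; on a vector fixed by all `γ(c)`, `ρ(e_γ)` is multiplication
by `n`. Hence, if `ρ(f)` vanishes on every irreducible `ρ` with a nontrivially fixed vector, then
`ρ(f * e_γ)` vanishes on every irreducible `ρ`, and `f * e_γ = 0` because `ℂ[G]` is semisimple.
Conversely, taking for `γ` the embedding of the cyclic group generated by `g ≠ 1` shows that `ρ(f)`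
kills every vector fixed by `g`; such vectors span a subrepresentation, which is all of `ρ` when `ρ` is
irreducible and the span is nonzero.
-/

open MonoidAlgebra

theorem IsSemisimpleRing.eq_zero_of_forall_isSimpleModule_mul_eq_zero {R : Type*} [Ring R]
    [IsSemisimpleRing R] {b : R}
    (hb : ∀ S : Submodule R R, IsSimpleModule R S → ∀ s ∈ S, b * s = 0) : b = 0 := by
  have hann : b ∈ (⊤ : Submodule R R).annihilator := by
    rw [← IsSemisimpleModule.sSup_simples_eq_top R R, sSup_eq_iSup', Submodule.annihilator_iSup,
      Submodule.mem_iInf]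
    exact fun S => Submodule.mem_annihilator.2 (hb S.1 S.2)
  simpa using Submodule.mem_annihilator.1 hann 1 trivial

noncomputable def zmodPowHom {G : Type*} [Group G] (g : G) [NeZero (orderOf g)] :
    Multiplicative (ZMod (orderOf g)) →* G :=
  MonoidHom.mk' (fun t => g ^ t.toAdd.val) fun s t => by
    simp [ZMod.val_add, pow_mod_orderOf, pow_add]

lemma zmodPowHom_ofAdd_one {G : Type*} [Group G] (g : G) [NeZero (orderOf g)] :
    zmodPowHom g (Multiplicative.ofAdd 1) = g := by
  simp [zmodPowHom, ZMod.val_one_eq_one_mod, pow_mod_orderOf]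

namespace MonoidAlgebra

variable {k G : Type*} [Semiring k]

noncomputable def ofFun [Fintype G] (f : G → k) : k[G] :=
  ofCoeff (Finsupp.equivFunOnFinite.symm f)

variable [Group G] {C : Type*} [Group C] [Fintype C]

noncomputable def radonElement (γ : C →* G) : k[G] :=
  ∑ c, single (γ c)⁻¹ 1

lemma coeff_mul_radonElement (a : k[G]) (γ : C →* G) (x : G) :
    (a * radonElement γ).coeff x = ∑ c, a.coeff (x * γ c) := by
  simp [radonElement, Finset.mul_sum, coeff_sum, coeff_mul_single_apply]

lemma single_mul_radonElement (γ : C →* G) (c : C) :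
    single (γ c) (1 : k) * radonElement γ = radonElement γ := by
  simp only [radonElement, Finset.mul_sum, single_mul_single, one_mul]
  exact Fintype.sum_equiv (Equiv.mulRight c⁻¹) _ _ fun d => by simp

end MonoidAlgebra

lemma radonSum_eq_coeff_mul_radonElement {G : Type*} [Group G] [Fintype G] {n : ℕ} [NeZero n]
    (f : G → ℂ) (γ : Multiplicative (ZMod n) →* G) (x : G) :
    radonSum f γ x = (ofFun f * radonElement γ).coeff x := by
  rw [coeff_mul_radonElement]
  exact Fintype.sum_equiv Multiplicative.ofAdd _ _ fun _ => rfl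

namespace Representation

section

variable {k G V W : Type*} [CommSemiring k] [Monoid G] [AddCommMonoid V] [Module k V]
  [AddCommMonoid W] [Module k W] (ρ : Representation k G V) (e : V ≃ₗ[k] W)

noncomputable def transport : Representation k G W :=
  (e.conjAlgEquiv k).toAlgHom.toMonoidHom.comp ρ

lemma asAlgebraHom_transport (r : k[G]) :
    (ρ.transport e).asAlgebraHom r = e.conjAlgEquiv k (ρ.asAlgebraHom r) := by
  have : (ρ.transport e).asAlgebraHom = (e.conjAlgEquiv k).toAlgHom.comp ρ.asAlgebraHom :=
    algHom_ext (fun g => by simp [transport]) (Subsingleton.elim _ _)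
  rw [this]
  rfl

lemma ofModule'_asAlgebraHom_apply (M : Type*) [AddCommMonoid M] [Module k M] [Module k[G] M]
    [IsScalarTower k k[G] M] (r : k[G]) (m : M) :
    (ofModule' M).asAlgebraHom r m = r • m := by
  rw [asAlgebraHom_def, ofModule', (MonoidAlgebra.lift k (M →ₗ[k] M) G).apply_symm_apply]
  rfl

end

section

variable {k G V : Type*} [Field k] [Monoid G] [AddCommGroup V] [Module k V]

theorem isIrreducible_iff (ρ : Representation k G V) :
    ρ.IsIrreducible ↔
      Nontrivial V ∧ ∀ W : Submodule k V, (∀ x : G, ∀ v ∈ W, ρ x v ∈ W) → W = ⊥ ∨ W = ⊤ := by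
  rw [IsIrreducible, isSimpleOrder_iff, ← Submodule.nontrivial_iff k (M := V)]
  refine and_congr ⟨fun _ => ?_, fun _ => ?_⟩ ⟨fun h W hW => ?_, fun h U => ?_⟩
  · exact (Subrepresentation.toSubmodule_injective (ρ := ρ)).nontrivial
  · exact nontrivial_of_ne ⊥ ⊤ fun h => bot_ne_top congr(($h).toSubmodule)
  · exact (h ⟨W, hW⟩).imp (congrArg Subrepresentation.toSubmodule)
      (congrArg Subrepresentation.toSubmodule)
  · exact (h U.toSubmodule U.apply_mem_toSubmodule).imp Subrepresentation.ext
      Subrepresentation.ext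

theorem isIrreducible_transport {W : Type*} [AddCommGroup W] [Module k W]
    (ρ : Representation k G V) [ρ.IsIrreducible] (e : V ≃ₗ[k] W) :
    (ρ.transport e).IsIrreducible := by
  obtain ⟨_, hρ⟩ := (isIrreducible_iff ρ).1 inferInstance
  refine (isIrreducible_iff _).2 ⟨e.symm.toEquiv.nontrivial, fun U hU => ?_⟩
  have hUe : ∀ x : G, ∀ v ∈ U.comap e.toLinearMap, ρ x v ∈ U.comap e.toLinearMap :=
    fun x v hv => by simpa [transport] using hU x (e v) hv
  refine (hρ _ hUe).imp (fun h => ?_) (fun h => ?_)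
  · rw [← Submodule.map_comap_eq_of_surjective e.surjective U, h, Submodule.map_bot]
  · rw [← Submodule.map_comap_eq_of_surjective e.surjective U, h, Submodule.map_top,
      LinearMap.range_eq_top.2 e.surjective]

theorem isIrreducible_ofModule' (M : Type*) [AddCommGroup M] [Module k M] [Module k[G] M]
    [IsScalarTower k k[G] M] [IsSimpleModule k[G] M] :
    (ofModule' (k := k) (G := G) M).IsIrreducible := by
  refine (isIrreducible_iff _).2 ⟨IsSimpleModule.nontrivial k[G] M, fun W hW => ?_⟩
  let W' : Submodule k[G] M :=
    { W with
      smul_mem' r w hw := by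
        induction r using MonoidAlgebra.induction_on with
        | of g => simpa [← ofModule'_asAlgebraHom_apply] using hW g w hw
        | add r s hr hs => simpa [add_smul] using W.add_mem hr hs
        | smul c r hr => simpa [smul_assoc] using W.smul_mem c hr }
  exact (eq_bot_or_eq_top W').imp (congrArg (Submodule.restrictScalars k))
    (congrArg (Submodule.restrictScalars k))

end

section

variable {k G V : Type*} [CommSemiring k] [Group G] [AddCommMonoid V] [Module k V]
  (ρ : Representation k G V)

lemma asAlgebraHom_ofFun [Fintype G] (f : G → k) :
    ρ.asAlgebraHom (ofFun f) = ∑ y, f y • ρ y := by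
  rw [asAlgebraHom_def, lift_apply, Finsupp.sum_fintype _ _ (by simp)]
  rfl

variable {C : Type*} [Group C] [Fintype C] (γ : C →* G)

lemma asAlgebraHom_radonElement_apply_of_forall_fixed {v : V} (hv : ∀ c, ρ (γ c) v = v) :
    ρ.asAlgebraHom (radonElement γ) v = (Fintype.card C : k) • v := by
  simp [radonElement, ← map_inv, hv, Nat.cast_smul_eq_nsmul]

lemma apply_asAlgebraHom_radonElement_apply (c : C) (v : V) :
    ρ (γ c) (ρ.asAlgebraHom (radonElement γ) v) = ρ.asAlgebraHom (radonElement γ) v := by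
  rw [← asAlgebraHom_single_one, ← Module.End.mul_apply, ← map_mul, single_mul_radonElement]

lemma asAlgebraHom_radonElement_eq_zero {γ : C →* G} (hγ : γ ≠ 1)
    (hfree : ∀ g ≠ 1, ∀ v, ρ g v = v → v = 0) :
    ρ.asAlgebraHom (radonElement γ) = 0 := by
  obtain ⟨c, hc⟩ := DFunLike.ne_iff.1 hγ
  exact LinearMap.ext fun v => hfree _ hc _ (ρ.apply_asAlgebraHom_radonElement_apply γ c v)

def nontrivialFixedSpan : Subrepresentation ρ where
  toSubmodule := Submodule.span k {v | ∃ g ≠ 1, ρ g v = v}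
  apply_mem_toSubmodule x v hv := by
    refine Submodule.span_le (p := (Submodule.span k _).comap (ρ x)) |>.2 ?_ hv
    rintro w ⟨g, hg, hgw⟩
    refine Submodule.subset_span ⟨x * g * x⁻¹, by simpa [mul_inv_eq_one] using hg, ?_⟩
    simp [hgw]

end

section

variable {G V : Type*} [Group G] [Fintype G] [AddCommGroup V] [Module ℂ V]
  (ρ : Representation ℂ G V) {f : G → ℂ}

lemma asAlgebraHom_ofFun_apply_eq_zero_of_fixed (hf : RadonNull G f) {g : G} (hg : g ≠ 1)
    {v : V} (hv : ρ g v = v) : ρ.asAlgebraHom (ofFun f) v = 0 := by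
  have : NeZero (orderOf g) := ⟨(orderOf_pos g).ne'⟩
  have hγ : zmodPowHom g ≠ 1 := fun h => hg <| by
    rw [← zmodPowHom_ofAdd_one g, h, MonoidHom.one_apply]
  have hn : 2 ≤ orderOf g := by
    have := orderOf_eq_one_iff.not.2 hg
    have := (orderOf_pos g).ne'
    omega
  have hconv : ofFun f * radonElement (zmodPowHom g) = 0 :=
    coeff_injective <| Finsupp.ext fun x => by
      rw [← radonSum_eq_coeff_mul_radonElement]
      exact hf _ hn _ hγ x
  have hfixed : ∀ c, ρ (zmodPowHom g c) v = v := fun c => by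
    simp [zmodPowHom, Module.End.pow_apply, Function.iterate_fixed hv]
  have := congr(ρ.asAlgebraHom $hconv v)
  rw [map_mul, Module.End.mul_apply, asAlgebraHom_radonElement_apply_of_forall_fixed _ _ hfixed,
    map_smul, map_zero, LinearMap.zero_apply] at this
  exact (smul_eq_zero.1 this).resolve_left (Nat.cast_ne_zero.2 Fintype.card_ne_zero)

theorem sum_smul_eq_zero_of_radonNull (hf : RadonNull G f) [ρ.IsIrreducible]
    (hfix : ∃ (x : G) (v : V), x ≠ 1 ∧ v ≠ 0 ∧ ρ x v = v) : ∑ y, f y • ρ y = 0 := by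
  obtain ⟨g, v, hg, hv, hgv⟩ := hfix
  have hspan : ρ.nontrivialFixedSpan = ⊤ := (eq_bot_or_eq_top _).resolve_left fun h => by
    have hmem : v ∈ ρ.nontrivialFixedSpan.toSubmodule := Submodule.subset_span ⟨g, hg, hgv⟩
    rw [h] at hmem
    exact hv ((Submodule.mem_bot ℂ).1 hmem)
  have htop : Submodule.span ℂ {v | ∃ g ≠ 1, ρ g v = v} = ⊤ := congr(($hspan).toSubmodule)
  rw [← asAlgebraHom_ofFun, ← LinearMap.ker_eq_top, eq_top_iff, ← htop, Submodule.span_le]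
  exact fun w ⟨g, hg, hgw⟩ => ρ.asAlgebraHom_ofFun_apply_eq_zero_of_fixed hf hg hgw

end

end Representation

theorem MonoidAlgebra.eq_zero_of_forall_isIrreducible {k : Type} {G : Type*} [Field k] [Group G]
    [Finite G] [NeZero (Nat.card G : k)] {b : k[G]}
    (hb : ∀ (V : Type) [AddCommGroup V] [Module k V] [FiniteDimensional k V]
      (ρ : Representation k G V), ρ.IsIrreducible → ρ.asAlgebraHom b = 0) :
    b = 0 := by
  refine IsSemisimpleRing.eq_zero_of_forall_isSimpleModule_mul_eq_zero fun S _ s hs => ?_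
  have := Representation.isIrreducible_ofModule' (k := k) (G := G) S
  -- `S` need not live in `Type`, but its transport to coordinates `Fin d → k` does.
  let e := (Module.finBasis k S).equivFun
  have hS := hb _ ((Representation.ofModule' S).transport e)
    (Representation.isIrreducible_transport _ e)
  rw [Representation.asAlgebraHom_transport, map_eq_zero_iff _ (e.conjAlgEquiv k).injective] at hS
  simpa [Representation.ofModule'_asAlgebraHom_apply] using congr(($hS ⟨s, hs⟩ : S).val)

theorem radonNull_of_forall_isIrreducible {G : Type*} [Group G] [Fintype G] {f : G → ℂ}
    (H : ∀ (V : Type) [AddCommGroup V] [Module ℂ V] [FiniteDimensional ℂ V]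
      (ρ : Representation ℂ G V), ρ.IsIrreducible →
      (∃ (x : G) (v : V), x ≠ 1 ∧ v ≠ 0 ∧ ρ x v = v) → ∑ y, f y • ρ y = 0) :
    RadonNull G f := by
  intro n hn γ hγ x
  have : NeZero n := ⟨by omega⟩
  suffices ofFun f * radonElement γ = 0 by
    rw [radonSum_eq_coeff_mul_radonElement, this]
    rfl
  refine MonoidAlgebra.eq_zero_of_forall_isIrreducible fun V _ _ _ ρ hρ => ?_
  rw [map_mul]
  by_cases hfix : ∃ (x : G) (v : V), x ≠ 1 ∧ v ≠ 0 ∧ ρ x v = v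
  · rw [ρ.asAlgebraHom_ofFun, H V ρ hρ hfix, zero_mul]
  · have hfree : ∀ g ≠ 1, ∀ v, ρ g v = v → v = 0 := fun g hg v hv =>
      not_not.1 fun hv0 => hfix ⟨g, v, hg, hv0, hv⟩
    rw [ρ.asAlgebraHom_radonElement_eq_zero hγ hfree, mul_zero]

theorem radon_null_iff_fourier_vanishes {G : Type*} [Group G] [Fintype G] (f : G → ℂ) :
    RadonNull G f ↔
      ∀ (V : Type) [AddCommGroup V] [Module ℂ V] [FiniteDimensional ℂ V]
        (ρ : Representation ℂ G V),
        (Nontrivial V ∧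
          ∀ W : Submodule ℂ V, (∀ x : G, ∀ v ∈ W, ρ x v ∈ W) → W = ⊥ ∨ W = ⊤) →
        (∃ (x : G) (v : V), x ≠ 1 ∧ v ≠ 0 ∧ ρ x v = v) →
        (∑ y : G, f y • ρ y) = 0 := by
  simp only [← Representation.isIrreducible_iff]
  exact ⟨fun hf V _ _ _ ρ _ => ρ.sum_smul_eq_zero_of_radonNull hf,
    radonNull_of_forall_isIrreducible⟩
end
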